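/- Let H be a Hilbert space, K : H → H' a compact linear operator into a normed space H', M > 0, and Q : H → [0, ∞) a function. Suppose that for every ε > 0 there exists D_ε > 0 such that ‖u‖² ≤ ε Q(u) + D_ε ‖Ku‖² for all u in a subspace V ⊆ H closed under subtraction. Then there is no sequence (f_k) in V with ‖f_k‖ = 1, Q(f_k − f_l) ≤ 4M for all k ≠ l, and ‖f_k − f_l‖² ≥ 1/2 for all k ≠ l. -/
import Mathlib

open MeasureTheory

/-- A compactness estimate `‖u‖² ≤ ε Q(u) + D_ε ‖Ku‖²` (K compact) on a
subtraction-closed subspace `V` rules out a unit-norm sequence in `V` with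
pairwise energy `Q(f_k - f_l) ≤ 4M` and pairwise separation `‖f_k - f_l‖² ≥ 1/2`. -/
theorem no_separated_bounded_energy_sequence
    {H H' : Type*} [NormedAddCommGroup H] [InnerProductSpace ℝ H]
    [NormedAddCommGroup H'] [NormedSpace ℝ H']
    (K : H →L[ℝ] H') (hK : IsCompactOperator K)
    (M : ℝ) (hM : 0 < M)
    (Q : H → ℝ) (hQ : ∀ u, 0 ≤ Q u)
    (V : Set H) (hV : ∀ u ∈ V, ∀ v ∈ V, u - v ∈ V)
    (hest : ∀ ε : ℝ, 0 < ε → ∃ D : ℝ, 0 < D ∧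
      ∀ u ∈ V, ‖u‖ ^ 2 ≤ ε * Q u + D * ‖K u‖ ^ 2) :
    ¬ ∃ f : ℕ → H, (∀ k, f k ∈ V) ∧ (∀ k, ‖f k‖ = 1) ∧
      (∀ k l, k ≠ l → Q (f k - f l) ≤ 4 * M) ∧
      (∀ k l, k ≠ l → (1 / 2 : ℝ) ≤ ‖f k - f l‖ ^ 2) := by
  rintro ⟨f, hfV, hf1, hfQ, hfsep⟩
  obtain ⟨D, hD, hDest⟩ := hest (1 / (16 * M)) (by positivity)
  -- lower bound on ‖K (f k - f l)‖² for k ≠ l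
  have key : ∀ k l, k ≠ l → 1 / (4 * D) ≤ ‖K (f k - f l)‖ ^ 2 := by
    intro k l hkl
    have h1 := hDest _ (hV _ (hfV k) _ (hfV l))
    have h2 := hfsep k l hkl
    have h3 := hfQ k l hkl
    have hε : (1 / (16 * M)) * Q (f k - f l) ≤ 1 / 4 := by
      rw [div_mul_eq_mul_div, one_mul, div_le_div_iff₀ (by positivity) (by norm_num)]
      nlinarith
    have h4 : (1 / 4 : ℝ) ≤ D * ‖K (f k - f l)‖ ^ 2 := by linarith
    rw [div_le_iff₀ (by positivity)]
    nlinarith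
  -- K (f k) lies in a compact set
  obtain ⟨S, hS, hSsub⟩ := hK.image_closedBall_subset_compact 1
  have hmem : ∀ k, K (f k) ∈ S := by
    intro k
    apply hSsub
    exact ⟨f k, by simp [Metric.mem_closedBall, dist_zero_right, hf1 k], rfl⟩
  obtain ⟨x, -, φ, hφ, hconv⟩ := hS.tendsto_subseq hmem
  have hcauchy := hconv.cauchySeq
  rw [Metric.cauchySeq_iff] at hcauchy
  obtain ⟨N, hN⟩ := hcauchy (Real.sqrt (1 / (4 * D)))
    (Real.sqrt_pos.mpr (by positivity))
  have hne : φ (N + 1) ≠ φ N := (hφ (Nat.lt_succ_self N)).ne'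
  have hlt := hN (N + 1) (Nat.le_succ N) N le_rfl
  rw [dist_eq_norm] at hlt
  have hKlin : K (f (φ (N + 1))) - K (f (φ N)) = K (f (φ (N + 1)) - f (φ N)) := by
    rw [map_sub]
  simp only [Function.comp_apply] at hlt; rw [hKlin] at hlt
  have h5 := key (φ (N + 1)) (φ N) hne
  have h6 : ‖K (f (φ (N + 1)) - f (φ N))‖ ^ 2 < 1 / (4 * D) := by
    have := Real.sq_sqrt (le_of_lt (show (0:ℝ) < 1 / (4 * D) by positivity))
    nlinarith [norm_nonneg (K (f (φ (N + 1)) - f (φ N))), Real.sqrt_nonneg (1 / (4 * D))]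
  linarith
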